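/- arXiv:2407.15381 — 5 statements merged into one kernel-verified Lean document; each statement's English description precedes it below -/
import Mathlib

section
/- Let R be a commutative ring and x ∈ R an element such that R is x-torsion free (i.e. multiplication by x is injective on R). Then the x-adic completion R̂ = lim_n R/x^nR is x-torsion free: multiplication by (the image of) x is injective on R̂. -/
/-!
If `x • c = 0` in the completion, lift the component `c (n+1)` to some `m ∈ M`. Then
`x • m ∈ x ^ (n+1) M`, so `x • m = x • (x ^ n • m')`, and cancelling `x` gives
`m ∈ x ^ n M`; hence the component `c n`, which is the image of `m`, vanishes.
-/

open Submodule

section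

variable {R M : Type*} [CommSemiring R] [AddCommMonoid M] [Module R M] {x : R}

theorem Submodule.mem_span_singleton_pow_smul_top_iff {n : ℕ} {m : M} :
    m ∈ (Ideal.span {x}) ^ n • (⊤ : Submodule R M) ↔ ∃ m' : M, x ^ n • m' = m := by
  simp [Ideal.span_singleton_pow, ideal_span_singleton_smul, mem_smul_pointwise_iff_exists]

theorem IsSMulRegular.mem_pow_smul_top_of_smul_mem (hx : IsSMulRegular M x) {n : ℕ} {m : M}
    (h : x • m ∈ (Ideal.span {x}) ^ (n + 1) • (⊤ : Submodule R M)) :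
    m ∈ (Ideal.span {x}) ^ n • (⊤ : Submodule R M) := by
  obtain ⟨m', hm'⟩ := mem_span_singleton_pow_smul_top_iff.mp h
  exact mem_span_singleton_pow_smul_top_iff.mpr ⟨m', hx (by simpa [pow_succ', mul_smul] using hm')⟩

end

theorem AdicCompletion.isSMulRegular_span_singleton {R M : Type*} [CommRing R] [AddCommGroup M]
    [Module R M] {x : R} (hx : IsSMulRegular M x) :
    IsSMulRegular (AdicCompletion (Ideal.span {x}) M) x := by
  refine IsSMulRegular.of_right_eq_zero_of_smul fun c hc ↦ AdicCompletion.ext fun n ↦ ?_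
  obtain ⟨m, hm⟩ := Submodule.Quotient.mk_surjective _ (c.val (n + 1))
  have hxm : x • m ∈ (Ideal.span {x}) ^ (n + 1) • (⊤ : Submodule R M) := by
    rw [← Quotient.mk_eq_zero, Quotient.mk_smul, hm, ← val_smul_apply, hc, val_zero_apply]
  rw [← transitionMap_comp_eval_apply _ _ n.le_succ, ← hm, val_zero_apply]
  exact (Quotient.mk_eq_zero _).mpr (hx.mem_pow_smul_top_of_smul_mem hxm)

/-- If `R` is `x`-torsion free, then the `x`-adic completion
`R̂ = lim_n R/x^nR` is `x`-torsion free: multiplication by (the image of) `x`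
is injective on `R̂`. -/
theorem stmt0 {R : Type*} [CommRing R] (x : R)
    (hx : Function.Injective fun a : R => x * a) :
    Function.Injective fun c : AdicCompletion (Ideal.span {x}) R =>
      algebraMap R (AdicCompletion (Ideal.span {x}) R) x * c := by
  simp_rw [← Algebra.smul_def]
  exact AdicCompletion.isSMulRegular_span_singleton (M := R) hx
end

section
/- Let R be a commutative ring, x ∈ R, and let R̂ = lim_n R/x^nR be the x-adic completion. For every integer n ≥ 1, the canonical homomorphism R → R̂ induces an isomorphism R/x^nR ≅ R̂/x^nR̂. -/
/-!
For a finitely generated ideal `I`, the kernel of the evaluation `R̂ → R ⧸ I ^ n` is `I ^ n R̂`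
(Stacks 05GG). The evaluation is surjective and restricts to the quotient map on `R`, so it
inverts the map `R ⧸ I ^ n → R̂ ⧸ I ^ n R̂`.
-/

namespace AdicCompletion

variable {R : Type*} [CommRing R] {I : Ideal R}

theorem ker_evalₐ_eq_map (hI : I.FG) (n : ℕ) :
    RingHom.ker (evalₐ I n) = (I ^ n).map (algebraMap R (AdicCompletion I R)) := by
  ext c
  have hc : evalₐ I n c = 0 ↔ eval I R n c = 0 := by
    constructor <;> intro h
    · rw [← factor_evalₐ_eq_eval I c (by simp), h, _root_.map_zero]
    · rw [← factor_eval_eq_evalₐ I c (by simp), h, _root_.map_zero]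
  rw [RingHom.mem_ker, hc, ← LinearMap.mem_ker, ← pow_smul_top_eq_ker_eval hI,
    Ideal.smul_top_eq_map, Submodule.restrictScalars_mem]

theorem bijective_quotientMap_algebraMap_pow (hI : I.FG) (n : ℕ) :
    Function.Bijective (Ideal.quotientMap ((I ^ n).map (algebraMap R (AdicCompletion I R)))
      (algebraMap R (AdicCompletion I R)) Ideal.le_comap_map) := by
  refine ⟨Ideal.quotientMap_injective' fun r hr ↦ ?_, fun y ↦ ?_⟩
  · rwa [Ideal.mem_comap, ← ker_evalₐ_eq_map hI, RingHom.mem_ker, AlgHom.commutes,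
      Ideal.Quotient.algebraMap_eq, Ideal.Quotient.eq_zero_iff_mem] at hr
  · obtain ⟨c, rfl⟩ := Ideal.Quotient.mk_surjective y
    obtain ⟨r, hr⟩ := Ideal.Quotient.mk_surjective (evalₐ I n c)
    refine ⟨Ideal.Quotient.mk _ r, ?_⟩
    rw [Ideal.quotientMap_mk, Ideal.Quotient.eq, ← ker_evalₐ_eq_map hI, RingHom.mem_ker,
      map_sub, AlgHom.commutes, Ideal.Quotient.algebraMap_eq, hr, sub_self]

end AdicCompletion

theorem stmt1_general {R : Type*} [CommRing R] (x : R) (n : ℕ) :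
    Function.Bijective
      (Ideal.quotientMap
        (Ideal.map (algebraMap R (AdicCompletion (Ideal.span {x}) R)) (Ideal.span {x} ^ n))
        (algebraMap R (AdicCompletion (Ideal.span {x}) R))
        Ideal.le_comap_map) :=
  AdicCompletion.bijective_quotientMap_algebraMap_pow (Submodule.fg_span_singleton x) n

/-- For a commutative ring `R`, `x ∈ R`, and the `x`-adic completion
`R̂ = lim_n R/x^nR`, for every `n ≥ 1` the canonical homomorphism `R → R̂` induces an
isomorphism `R/x^nR ≅ R̂/x^nR̂`. -/
theorem stmt1 {R : Type*} [CommRing R] (x : R) (n : ℕ) (hn : 1 ≤ n) :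
    Function.Bijective
      (Ideal.quotientMap
        (Ideal.map (algebraMap R (AdicCompletion (Ideal.span {x}) R)) (Ideal.span {x} ^ n))
        (algebraMap R (AdicCompletion (Ideal.span {x}) R))
        Ideal.le_comap_map) :=
  stmt1_general x n
end

section
/- Fix a prime p. Let R be a commutative ring such that for every prime ideal 𝔭 of R containing p, the localization R_𝔭 is p-torsion free (multiplication by p is injective on R_𝔭). Then for every integer n ≥ 1 the map R/p^nR → R/p^{n+1}R induced by multiplication by p is injective; equivalently, the sequence 0 → R/p^nR →(·p)→ R/p^{n+1}R → R/pR → 0 is exact. -/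
/-! Torsion-freeness is a local property: if `p • x = 0` in `R`, then `x` vanishes in every
`R_𝔭` (when `p ∉ 𝔭` because `p` is a unit there, when `p ∈ 𝔭` by hypothesis), hence `x = 0`.
So `R` itself is `p`-torsion free, and `p a = p^(n+1) b` cancels to `a = p^n b`. -/

theorem isLeftRegular_of_isLeftRegular_localization_atPrime {R : Type*} [CommRing R] {r : R}
    (h : ∀ (P : Ideal R) [P.IsPrime], r ∈ P →
      IsLeftRegular (algebraMap R (Localization.AtPrime P) r)) :
    IsLeftRegular r := by
  intro x y hxy
  rw [← sub_eq_zero]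
  refine eq_zero_of_localization _ fun P _ ↦ ?_
  have hr : IsLeftRegular (algebraMap R (Localization.AtPrime P) r) := by
    by_cases hrP : r ∈ P
    · exact h P hrP
    · exact (IsLocalization.map_units _ (⟨r, hrP⟩ : P.primeCompl)).isRegular.left
  refine hr ?_
  simp only [map_sub, mul_sub, ← map_mul, mul_zero]
  exact sub_eq_zero.mpr (congrArg _ hxy)

theorem stmt2_general (p : ℕ) {R : Type*} [CommRing R]
    (h : ∀ (P : Ideal R) [P.IsPrime], (p : R) ∈ P →
      Function.Injective fun a : Localization.AtPrime P => (p : Localization.AtPrime P) * a)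
    (n : ℕ) :
    ∀ a : R, (p : R) * a ∈ Ideal.span {(p : R) ^ (n + 1)} →
      a ∈ Ideal.span {(p : R) ^ n} := by
  have hp : IsLeftRegular (p : R) :=
    isLeftRegular_of_isLeftRegular_localization_atPrime fun P _ hP ↦ by
      rw [map_natCast]; exact h P hP
  intro a ha
  obtain ⟨b, hb⟩ := Ideal.mem_span_singleton.mp ha
  rw [pow_succ', mul_assoc] at hb
  exact Ideal.mem_span_singleton.mpr ⟨b, hp hb⟩

/-- Fix a prime `p`. If for every prime ideal `𝔭` of `R` containing `p`
the localization `R_𝔭` is `p`-torsion free, then for every `n ≥ 1` the map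
`R/p^nR → R/p^{n+1}R` induced by multiplication by `p` is injective, i.e. for `a : R`,
if `p·a ∈ p^{n+1}R` then `a ∈ p^nR`. -/
theorem stmt2 (p : ℕ) (hp : p.Prime) {R : Type*} [CommRing R]
    (h : ∀ (P : Ideal R) [P.IsPrime], (p : R) ∈ P →
      Function.Injective fun a : Localization.AtPrime P => (p : Localization.AtPrime P) * a)
    (n : ℕ) (hn : 1 ≤ n) :
    ∀ a : R, (p : R) * a ∈ Ideal.span {(p : R) ^ (n + 1)} →
      a ∈ Ideal.span {(p : R) ^ n} :=
  stmt2_general p h n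
end

section
/- Fix a prime p. Let B be a p-torsion-free commutative ring with two Frobenius lifts φ₁, φ₂ and associated δ-operators δ₁, δ₂ such that δ₁(a) − δ₂(a) ∈ pB for all a ∈ B; extend everything to B[1/p]. Then for every x ∈ B and every integer r ≥ 0, the B-subalgebras of B[1/p] given by B₁^r = adjoin_B{ δ₁^t(x/p) : 0 ≤ t ≤ r } and B₂^r = adjoin_B{ δ₂^t(x/p) : 0 ≤ t ≤ r } are equal. -/
/-!
Put `u = x/p` and `B₂ⁿ = adjoin_B {δ₂ᵗ u : t ≤ n}`. By symmetry it suffices to show that `δ₁` maps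
`B₂ⁿ` into `B₂ⁿ⁺¹`. Since `δ₁(a + b)` and `δ₁(ab)` are integral polynomials in `a, b, δ₁ a, δ₁ b`
and `δ₁` preserves `B`, it is enough to check this on the generators `z = δ₂ᵗ u`, where it amounts
to `φ₁ z ≡ φ₂ z mod p B₂ᵗ⁺¹`. This is proved in the stronger form
`φ₁ φ₂ᵐ z ≡ φ₂ᵐ⁺¹ z mod pᵐ⁺¹ B₂ᵗ⁺ᵐ⁺¹` by induction on `t`, using `p δ₂ w = φ₂ w - wᵖ` and the fact
that `a ≡ b mod pᵏ` with `k ≥ 1` gives `aᵖ ≡ bᵖ mod pᵏ⁺¹`. The case `t = 0` comes from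
`φ₁ φ₂ᵐ ≡ φ₂ᵐ⁺¹ mod pᵐ⁺²` on `B`, obtained in the same way from `φ₁ ≡ φ₂ mod p²`, which is the
hypothesis `δ₁ ≡ δ₂ mod p`.
-/

open Finset

section DeltaOperator

variable {R : Type*} [CommRing R] {p : ℕ} {φ : R →+* R} {δ : R → R}

theorem frobenius_eq_pow_add (hδ : ∀ y, (p : R) * δ y = φ y - y ^ p) (y : R) :
    φ y = y ^ p + p * δ y := by
  linear_combination -hδ y

theorem delta_mul (hreg : IsLeftRegular (p : R)) (hδ : ∀ y, (p : R) * δ y = φ y - y ^ p)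
    (a b : R) : δ (a * b) = a ^ p * δ b + b ^ p * δ a + p * (δ a * δ b) :=
  hreg <| by
    dsimp only
    rw [hδ, map_mul, frobenius_eq_pow_add hδ a, frobenius_eq_pow_add hδ b]
    ring

theorem delta_add (hp : p.Prime) (hreg : IsLeftRegular (p : R))
    (hδ : ∀ y, (p : R) * δ y = φ y - y ^ p) (a b : R) :
    δ (a + b) = δ a + δ b - ∑ k ∈ Ioo 0 p, a ^ k * b ^ (p - k) * ((p.choose k / p : ℕ) : R) :=
  hreg <| by
    dsimp only
    rw [hδ, map_add, add_pow_prime_eq' hp a b]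
    linear_combination -hδ a - hδ b

theorem delta_algebraMap {A : Type*} [CommRing A] [Algebra A R] {φA : A →+* A} {δA : A → A}
    (hreg : IsLeftRegular (p : R)) (hδ : ∀ y, (p : R) * δ y = φ y - y ^ p)
    (hφ : ∀ a, φ (algebraMap A R a) = algebraMap A R (φA a))
    (hδA : ∀ a, (p : A) * δA a = φA a - a ^ p) (a : A) :
    δ (algebraMap A R a) = algebraMap A R (δA a) :=
  hreg <| by
    dsimp only
    rw [hδ, hφ, ← map_pow, ← map_sub, ← hδA, map_mul, map_natCast]

theorem delta_mem_of_mem_adjoin {A : Type*} [CommRing A] [Algebra A R] (hp : p.Prime)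
    (hreg : IsLeftRegular (p : R)) (hδ : ∀ y, (p : R) * δ y = φ y - y ^ p)
    {s : Set R} {T : Subalgebra A R} (hsT : s ⊆ T) (hs : ∀ y ∈ s, δ y ∈ T)
    (halg : ∀ a : A, δ (algebraMap A R a) ∈ T) {v : R} (hv : v ∈ Algebra.adjoin A s) :
    δ v ∈ T := by
  induction hv using Algebra.adjoin_induction with
  | mem y hy => exact hs y hy
  | algebraMap a => exact halg a
  | add a b ha hb iha ihb =>
    rw [delta_add hp hreg hδ]
    exact sub_mem (add_mem iha ihb) <| sum_mem fun k _ =>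
      mul_mem (mul_mem (pow_mem (Algebra.adjoin_le hsT ha) _)
        (pow_mem (Algebra.adjoin_le hsT hb) _)) (natCast_mem _ _)
  | mul a b ha hb iha ihb =>
    rw [delta_mul hreg hδ]
    exact add_mem (add_mem (mul_mem (pow_mem (Algebra.adjoin_le hsT ha) _) ihb)
      (mul_mem (pow_mem (Algebra.adjoin_le hsT hb) _) iha)) (mul_mem (natCast_mem _ _)
        (mul_mem iha ihb))

end DeltaOperator

section DeltaTower

variable (A : Type*) {R : Type*} [CommRing A] [CommRing R] [Algebra A R]

/-- The paper's `Bⁿ` when `u = x/p`. -/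
def deltaTower (δ : R → R) (u : R) (n : ℕ) : Subalgebra A R :=
  Algebra.adjoin A {y | ∃ t ≤ n, y = δ^[t] u}

variable {A} {p : ℕ} {φ : R →+* R} {δ : R → R} {u : R}

theorem deltaTower_mono : Monotone (deltaTower A δ u) := fun _ _ hmn =>
  Algebra.adjoin_mono fun _ ⟨t, ht, hy⟩ => ⟨t, ht.trans hmn, hy⟩

theorem iterate_mem_deltaTower {t n : ℕ} (h : t ≤ n) : δ^[t] u ∈ deltaTower A δ u n :=
  Algebra.subset_adjoin ⟨t, h, rfl⟩

variable (hp : p.Prime) (hreg : IsLeftRegular (p : R)) (hδ : ∀ y, (p : R) * δ y = φ y - y ^ p)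
  (halg : ∀ a : A, δ (algebraMap A R a) ∈ (⊥ : Subalgebra A R))
include hp hreg hδ halg

theorem delta_mem_deltaTower_succ {n : ℕ} {v : R} (hv : v ∈ deltaTower A δ u n) :
    δ v ∈ deltaTower A δ u (n + 1) := by
  refine delta_mem_of_mem_adjoin hp hreg hδ
    (fun y hy => deltaTower_mono n.le_succ (Algebra.subset_adjoin hy)) ?_
    (fun a => SetLike.le_def.mp bot_le (halg a)) hv
  rintro _ ⟨t, ht, rfl⟩
  rw [← Function.iterate_succ_apply' δ t u]
  exact iterate_mem_deltaTower (by omega)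

theorem frobenius_mem_deltaTower_succ {n : ℕ} {v : R} (hv : v ∈ deltaTower A δ u n) :
    φ v ∈ deltaTower A δ u (n + 1) := by
  rw [frobenius_eq_pow_add hδ]
  exact add_mem (pow_mem (deltaTower_mono n.le_succ hv) p)
    (mul_mem (natCast_mem _ p) (delta_mem_deltaTower_succ hp hreg hδ halg hv))

theorem frobenius_pow_mem_deltaTower {n : ℕ} {v : R} (hv : v ∈ deltaTower A δ u n) (m : ℕ) :
    (φ ^ m) v ∈ deltaTower A δ u (n + m) := by
  induction m with
  | zero => exact hv
  | succ m ih =>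
    rw [RingHom.coe_pow, Function.iterate_succ_apply', ← RingHom.coe_pow]
    exact frobenius_mem_deltaTower_succ hp hreg hδ halg ih

end DeltaTower

section Congruences

variable {R : Type*} [CommRing R] {p k : ℕ}

theorem pow_succ_dvd_pow_sub_pow {a b : R} (hk : k ≠ 0) (h : (p : R) ^ k ∣ a - b) :
    (p : R) ^ (k + 1) ∣ a ^ p - b ^ p := by
  rw [← geom_sum₂_mul, pow_succ']
  exact mul_dvd_mul (dvd_geom_sum₂_self ((dvd_pow_self _ hk).trans h)) h

theorem Subring.exists_pow_sub_pow_eq_pow_succ_mul (T : Subring R) {a b s : R} (ha : a ∈ T)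
    (hb : b ∈ T) (hs : s ∈ T) (hk : k ≠ 0) (h : a - b = p ^ k * s) :
    ∃ s' ∈ T, a ^ p - b ^ p = p ^ (k + 1) * s' := by
  have hdvd : ((p : T)) ^ k ∣ ⟨a, ha⟩ - ⟨b, hb⟩ := ⟨⟨s, hs⟩, Subtype.ext (by simpa using h)⟩
  obtain ⟨c, hc⟩ := pow_succ_dvd_pow_sub_pow hk hdvd
  exact ⟨c, c.2, by simpa using congrArg Subtype.val hc⟩

end Congruences

section TwoFrobeniusLifts

variable {R : Type*} [CommRing R] {p : ℕ} {φ₁ φ₂ : R →+* R} {δ₁ δ₂ : R → R}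

theorem frobenius_comp_pow_succ_sub (hδ₂ : ∀ y, (p : R) * δ₂ y = φ₂ y - y ^ p) (m : ℕ) (w : R) :
    φ₁ ((φ₂ ^ (m + 1)) w) - (φ₂ ^ (m + 2)) w =
      φ₁ ((φ₂ ^ m) w) ^ p - (φ₂ ^ (m + 1)) w ^ p +
        p * (φ₁ ((φ₂ ^ m) (δ₂ w)) - (φ₂ ^ (m + 1)) (δ₂ w)) := by
  rw [show φ₁ ((φ₂ ^ (m + 1)) w) = φ₁ ((φ₂ ^ m) (φ₂ w)) from rfl,
    show (φ₂ ^ (m + 2)) w = (φ₂ ^ (m + 1)) (φ₂ w) from rfl, frobenius_eq_pow_add hδ₂ w]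
  simp only [map_add, map_pow, map_mul, map_natCast]
  ring

theorem pow_dvd_frobenius_comp_pow_sub (hδ₁ : ∀ y, (p : R) * δ₁ y = φ₁ y - y ^ p)
    (hδ₂ : ∀ y, (p : R) * δ₂ y = φ₂ y - y ^ p) (hdiff : ∀ a, (p : R) ∣ δ₁ a - δ₂ a) (m : ℕ)
    (b : R) : (p : R) ^ (m + 2) ∣ φ₁ ((φ₂ ^ m) b) - (φ₂ ^ (m + 1)) b := by
  induction m generalizing b with
  | zero =>
    have h : φ₁ b - φ₂ b = p * (δ₁ b - δ₂ b) := by linear_combination -hδ₁ b + hδ₂ b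
    show (p : R) ^ 2 ∣ φ₁ b - φ₂ b
    rw [h, sq]
    exact mul_dvd_mul_left _ (hdiff b)
  | succ m ih =>
    rw [frobenius_comp_pow_succ_sub hδ₂]
    refine dvd_add (pow_succ_dvd_pow_sub_pow (by omega) (ih b)) ?_
    rw [pow_succ']
    exact mul_dvd_mul_left _ (ih (δ₂ b))

theorem delta_eq_delta_add_of_frobenius_sub_eq (hreg : IsLeftRegular (p : R))
    (hδ₁ : ∀ y, (p : R) * δ₁ y = φ₁ y - y ^ p) (hδ₂ : ∀ y, (p : R) * δ₂ y = φ₂ y - y ^ p)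
    {z s : R} (h : φ₁ z - φ₂ z = p * s) : δ₁ z = δ₂ z + s :=
  hreg <| by
    dsimp only
    linear_combination hδ₁ z - hδ₂ z + h

theorem Subring.exists_frobenius_comp_pow_sub_delta_eq (hreg : IsLeftRegular (p : R))
    (hδ₂ : ∀ y, (p : R) * δ₂ y = φ₂ y - y ^ p) (T : Subring R) {m : ℕ} {w s₁ s₂ : R}
    (hw : (φ₂ ^ (m + 1)) w ∈ T) (hs₁ : s₁ ∈ T) (hs₂ : s₂ ∈ T)
    (h₁ : φ₁ ((φ₂ ^ (m + 1)) w) - (φ₂ ^ (m + 2)) w = p ^ (m + 2) * s₁)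
    (h₂ : φ₁ ((φ₂ ^ m) w) - (φ₂ ^ (m + 1)) w = p ^ (m + 1) * s₂) :
    ∃ s ∈ T, φ₁ ((φ₂ ^ m) (δ₂ w)) - (φ₂ ^ (m + 1)) (δ₂ w) = p ^ (m + 1) * s := by
  have hA : φ₁ ((φ₂ ^ m) w) ∈ T := by
    rw [sub_eq_iff_eq_add.mp h₂]
    exact add_mem (mul_mem (pow_mem (natCast_mem _ _) _) hs₂) hw
  obtain ⟨s₃, hs₃, h₃⟩ := T.exists_pow_sub_pow_eq_pow_succ_mul hA hw hs₂ (by omega) h₂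
  refine ⟨s₁ - s₃, sub_mem hs₁ hs₃, hreg ?_⟩
  dsimp only
  linear_combination h₁ - h₃ - frobenius_comp_pow_succ_sub hδ₂ m w

end TwoFrobeniusLifts

section Comparison

variable {A L : Type*} [CommRing A] [CommRing L] [Algebra A L] {p : ℕ} {φ₁ φ₂ : A →+* A}
  {ψ₁ ψ₂ : L →+* L} {δ₁ δ₂ : L → L} {u : L}

theorem deltaTower_le_of_delta_iterate_mem (hp : p.Prime) (hreg : IsLeftRegular (p : L))
    (hδ₁ : ∀ y, (p : L) * δ₁ y = ψ₁ y - y ^ p)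
    (halg₁ : ∀ a : A, δ₁ (algebraMap A L a) ∈ (⊥ : Subalgebra A L))
    (h : ∀ t, δ₁ (δ₂^[t] u) ∈ deltaTower A δ₂ u (t + 1)) (n : ℕ) :
    deltaTower A δ₁ u n ≤ deltaTower A δ₂ u n := by
  have hstable : ∀ {n v}, v ∈ deltaTower A δ₂ u n → δ₁ v ∈ deltaTower A δ₂ u (n + 1) :=
    fun {n _} hv => delta_mem_of_mem_adjoin hp hreg hδ₁
      (fun y hy => deltaTower_mono n.le_succ (Algebra.subset_adjoin hy))
      (fun _ ⟨t, ht, hy⟩ => hy ▸ deltaTower_mono (by omega) (h t))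
      (fun a => SetLike.le_def.mp bot_le (halg₁ a)) hv
  have hiterate : ∀ t, δ₁^[t] u ∈ deltaTower A δ₂ u t := by
    intro t
    induction t with
    | zero => exact iterate_mem_deltaTower (t := 0) le_rfl
    | succ t ih =>
      rw [Function.iterate_succ_apply']
      exact hstable ih
  exact Algebra.adjoin_le fun _ ⟨t, ht, hy⟩ => hy ▸ deltaTower_mono ht (hiterate t)

theorem exists_frobenius_comp_pow_sub_eq_of_mul_eq_algebraMap (hreg : IsLeftRegular (p : L))
    (hψ₁ : ∀ a, ψ₁ (algebraMap A L a) = algebraMap A L (φ₁ a))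
    (hψ₂ : ∀ a, ψ₂ (algebraMap A L a) = algebraMap A L (φ₂ a)) {x : A}
    (hu : p * u = algebraMap A L x) {m : ℕ}
    (hx : (p : A) ^ (m + 2) ∣ φ₁ ((φ₂ ^ m) x) - (φ₂ ^ (m + 1)) x) :
    ∃ c : A, ψ₁ ((ψ₂ ^ m) u) - (ψ₂ ^ (m + 1)) u = p ^ (m + 1) * algebraMap A L c := by
  obtain ⟨c, hc⟩ := hx
  have hcomm : ∀ n, (ψ₂ ^ n) (algebraMap A L x) = algebraMap A L ((φ₂ ^ n) x) := fun n =>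
    (Function.Semiconj.iterate_right (fun a => (hψ₂ a).symm) n x).symm
  refine ⟨c, hreg ?_⟩
  dsimp only
  calc (p : L) * (ψ₁ ((ψ₂ ^ m) u) - (ψ₂ ^ (m + 1)) u)
      = ψ₁ ((ψ₂ ^ m) (p * u)) - (ψ₂ ^ (m + 1)) (p * u) := by
        simp only [map_mul, map_natCast]; ring
    _ = algebraMap A L (φ₁ ((φ₂ ^ m) x) - (φ₂ ^ (m + 1)) x) := by
        rw [hu, hcomm, hcomm, hψ₁, map_sub]
    _ = p * (p ^ (m + 1) * algebraMap A L c) := by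
        rw [hc, map_mul, map_pow, map_natCast]; ring

variable (hp : p.Prime) (hreg : IsLeftRegular (p : L))
  (hδ₂ : ∀ y, (p : L) * δ₂ y = ψ₂ y - y ^ p)
  (halg₂ : ∀ a : A, δ₂ (algebraMap A L a) ∈ (⊥ : Subalgebra A L))
  (hψ₁ : ∀ a, ψ₁ (algebraMap A L a) = algebraMap A L (φ₁ a))
  (hψ₂ : ∀ a, ψ₂ (algebraMap A L a) = algebraMap A L (φ₂ a)) {x : A}
  (hu : p * u = algebraMap A L x)
  (hx : ∀ m, (p : A) ^ (m + 2) ∣ φ₁ ((φ₂ ^ m) x) - (φ₂ ^ (m + 1)) x)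
include hp hreg hδ₂ halg₂ hψ₁ hψ₂ hu hx

theorem exists_frobenius_comp_pow_sub_eq_mem_deltaTower (t m : ℕ) :
    ∃ s ∈ deltaTower A δ₂ u (t + m + 1),
      ψ₁ ((ψ₂ ^ m) (δ₂^[t] u)) - (ψ₂ ^ (m + 1)) (δ₂^[t] u) = p ^ (m + 1) * s := by
  induction t generalizing m with
  | zero =>
    obtain ⟨c, hc⟩ := exists_frobenius_comp_pow_sub_eq_of_mul_eq_algebraMap hreg hψ₁ hψ₂ hu (hx m)
    exact ⟨_, Subalgebra.algebraMap_mem _ c, hc⟩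
  | succ t ih =>
    obtain ⟨s₁, hs₁, h₁⟩ := ih (m + 1)
    obtain ⟨s₂, hs₂, h₂⟩ := ih m
    have hw := frobenius_pow_mem_deltaTower hp hreg hδ₂ halg₂
      (iterate_mem_deltaTower (u := u) (t := t) le_rfl) (m + 1)
    rw [Function.iterate_succ_apply']
    exact (deltaTower A δ₂ u (t + 1 + m + 1)).toSubring.exists_frobenius_comp_pow_sub_delta_eq
      hreg hδ₂ (deltaTower_mono (by omega) hw) (deltaTower_mono (by omega) hs₁)
      (deltaTower_mono (by omega) hs₂) h₁ h₂

theorem delta_iterate_mem_deltaTower_succ (hδ₁ : ∀ y, (p : L) * δ₁ y = ψ₁ y - y ^ p) (t : ℕ) :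
    δ₁ (δ₂^[t] u) ∈ deltaTower A δ₂ u (t + 1) := by
  obtain ⟨s, hs, h⟩ :=
    exists_frobenius_comp_pow_sub_eq_mem_deltaTower hp hreg hδ₂ halg₂ hψ₁ hψ₂ hu hx t 0
  rw [delta_eq_delta_add_of_frobenius_sub_eq hreg hδ₁ hδ₂ (by simpa using h),
    ← Function.iterate_succ_apply' δ₂]
  exact add_mem (iterate_mem_deltaTower le_rfl) hs

end Comparison

theorem deltaTower_le_deltaTower_of_dvd_delta_sub {A L : Type*} [CommRing A] [CommRing L]
    [Algebra A L] {p : ℕ} (hp : p.Prime) (hreg : IsLeftRegular (p : L)) {φ₁ φ₂ : A →+* A}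
    {δA₁ δA₂ : A → A} (hδA₁ : ∀ a, (p : A) * δA₁ a = φ₁ a - a ^ p)
    (hδA₂ : ∀ a, (p : A) * δA₂ a = φ₂ a - a ^ p) (hdiff : ∀ a, (p : A) ∣ δA₁ a - δA₂ a)
    {ψ₁ ψ₂ : L →+* L} (hψ₁ : ∀ a, ψ₁ (algebraMap A L a) = algebraMap A L (φ₁ a))
    (hψ₂ : ∀ a, ψ₂ (algebraMap A L a) = algebraMap A L (φ₂ a)) {δ₁ δ₂ : L → L}
    (hδ₁ : ∀ y, (p : L) * δ₁ y = ψ₁ y - y ^ p) (hδ₂ : ∀ y, (p : L) * δ₂ y = ψ₂ y - y ^ p)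
    {x : A} {u : L} (hu : p * u = algebraMap A L x) (n : ℕ) :
    deltaTower A δ₁ u n ≤ deltaTower A δ₂ u n := by
  have halg₁ (a : A) : δ₁ (algebraMap A L a) ∈ (⊥ : Subalgebra A L) := by
    rw [delta_algebraMap hreg hδ₁ hψ₁ hδA₁]
    exact Subalgebra.algebraMap_mem _ _
  have halg₂ (a : A) : δ₂ (algebraMap A L a) ∈ (⊥ : Subalgebra A L) := by
    rw [delta_algebraMap hreg hδ₂ hψ₂ hδA₂]
    exact Subalgebra.algebraMap_mem _ _
  have hx (m : ℕ) := pow_dvd_frobenius_comp_pow_sub hδA₁ hδA₂ hdiff m x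
  exact deltaTower_le_of_delta_iterate_mem hp hreg hδ₁ halg₁
    (delta_iterate_mem_deltaTower_succ hp hreg hδ₂ halg₂ hψ₁ hψ₂ hu hx hδ₁) n

theorem stmt8_general (p : ℕ) (hp : p.Prime) {B : Type*} [CommRing B]
    (φ₁ φ₂ : B →+* B) (δB₁ δB₂ : B → B)
    (hδB₁ : ∀ a : B, (p : B) * δB₁ a = φ₁ a - a ^ p)
    (hδB₂ : ∀ a : B, (p : B) * δB₂ a = φ₂ a - a ^ p)
    (hdiff : ∀ a : B, ∃ c : B, δB₁ a - δB₂ a = (p : B) * c)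
    (ψ₁ ψ₂ : Localization.Away (p : B) →+* Localization.Away (p : B))
    (hψ₁ : ∀ b : B, ψ₁ (algebraMap B (Localization.Away (p : B)) b)
        = algebraMap B (Localization.Away (p : B)) (φ₁ b))
    (hψ₂ : ∀ b : B, ψ₂ (algebraMap B (Localization.Away (p : B)) b)
        = algebraMap B (Localization.Away (p : B)) (φ₂ b))
    (δ₁ δ₂ : Localization.Away (p : B) → Localization.Away (p : B))
    (hδ₁ : ∀ y : Localization.Away (p : B), (p : Localization.Away (p : B)) * δ₁ y = ψ₁ y - y ^ p)
    (hδ₂ : ∀ y : Localization.Away (p : B), (p : Localization.Away (p : B)) * δ₂ y = ψ₂ y - y ^ p)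
    (x : B) (r : ℕ) :
    Algebra.adjoin B {y : Localization.Away (p : B) | ∃ t ≤ r,
        y = δ₁^[t] (algebraMap B (Localization.Away (p : B)) x *
          IsLocalization.Away.invSelf (S := Localization.Away (p : B)) (p : B))} =
      Algebra.adjoin B {y : Localization.Away (p : B) | ∃ t ≤ r,
        y = δ₂^[t] (algebraMap B (Localization.Away (p : B)) x *
          IsLocalization.Away.invSelf (S := Localization.Away (p : B)) (p : B))} := by
  have hreg : IsLeftRegular (p : Localization.Away (p : B)) := by
    rw [← map_natCast (algebraMap B (Localization.Away (p : B))) p]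
    exact (IsLocalization.Away.algebraMap_isUnit (p : B)).isRegular.left
  have hu : (p : Localization.Away (p : B)) * (algebraMap B _ x *
      IsLocalization.Away.invSelf (S := Localization.Away (p : B)) (p : B)) = algebraMap B _ x := by
    rw [mul_left_comm, ← map_natCast (algebraMap B (Localization.Away (p : B))) p,
      IsLocalization.Away.mul_invSelf, mul_one]
  exact le_antisymm
    (deltaTower_le_deltaTower_of_dvd_delta_sub hp hreg hδB₁ hδB₂ hdiff hψ₁ hψ₂ hδ₁ hδ₂ hu r)
    (deltaTower_le_deltaTower_of_dvd_delta_sub hp hreg hδB₂ hδB₁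
      (fun a => dvd_sub_comm.mp (hdiff a)) hψ₂ hψ₁ hδ₂ hδ₁ hu r)

/-- Let `B` be a `p`-torsion-free commutative ring with two Frobenius
lifts `φ₁, φ₂` (with `δ`-operators `δB₁, δB₂`) such that `δ₁(a) − δ₂(a) ∈ pB` for all
`a ∈ B`; extend everything to `B[1/p]`, giving `ψᵢ` and extended `δ`-operators `δᵢ`.
Then for every `x ∈ B` and `r ≥ 0`, the `B`-subalgebras of `B[1/p]`
`B₁^r = adjoin_B{ δ₁^t(x/p) : 0 ≤ t ≤ r }` and `B₂^r = adjoin_B{ δ₂^t(x/p) : 0 ≤ t ≤ r }`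
are equal. -/
theorem stmt8 (p : ℕ) (hp : p.Prime) {B : Type*} [CommRing B]
    (hB : Function.Injective fun b : B => (p : B) * b)
    (φ₁ φ₂ : B →+* B) (δB₁ δB₂ : B → B)
    (hδB₁ : ∀ a : B, (p : B) * δB₁ a = φ₁ a - a ^ p)
    (hδB₂ : ∀ a : B, (p : B) * δB₂ a = φ₂ a - a ^ p)
    (hdiff : ∀ a : B, ∃ c : B, δB₁ a - δB₂ a = (p : B) * c)
    (ψ₁ ψ₂ : Localization.Away (p : B) →+* Localization.Away (p : B))
    (hψ₁ : ∀ b : B, ψ₁ (algebraMap B (Localization.Away (p : B)) b)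
        = algebraMap B (Localization.Away (p : B)) (φ₁ b))
    (hψ₂ : ∀ b : B, ψ₂ (algebraMap B (Localization.Away (p : B)) b)
        = algebraMap B (Localization.Away (p : B)) (φ₂ b))
    (δ₁ δ₂ : Localization.Away (p : B) → Localization.Away (p : B))
    (hδ₁ : ∀ y : Localization.Away (p : B), (p : Localization.Away (p : B)) * δ₁ y = ψ₁ y - y ^ p)
    (hδ₂ : ∀ y : Localization.Away (p : B), (p : Localization.Away (p : B)) * δ₂ y = ψ₂ y - y ^ p)
    (x : B) (r : ℕ) :
    Algebra.adjoin B {y : Localization.Away (p : B) | ∃ t ≤ r,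
        y = δ₁^[t] (algebraMap B (Localization.Away (p : B)) x *
          IsLocalization.Away.invSelf (S := Localization.Away (p : B)) (p : B))} =
      Algebra.adjoin B {y : Localization.Away (p : B) | ∃ t ≤ r,
        y = δ₂^[t] (algebraMap B (Localization.Away (p : B)) x *
          IsLocalization.Away.invSelf (S := Localization.Away (p : B)) (p : B))} :=
  stmt8_general p hp φ₁ φ₂ δB₁ δB₂ hδB₁ hδB₂ hdiff ψ₁ ψ₂ hψ₁ hψ₂ δ₁ δ₂ hδ₁ hδ₂ x r
end

section
/- Fix a prime p. Let A be a commutative ring, R a p-torsion-free commutative A-algebra with a Frobenius lift φ and associated δ-operator δ, extended to R[1/p], which is naturally an A-algebra. Let 𝔞 ⊆ R be an ideal with p ∈ 𝔞, let D⁰ be the R-subalgebra of R[1/p] generated by { δ^j(y/p) : y ∈ 𝔞, j ≥ 0 }, let d : R[1/p] → Ω_{R[1/p]/A} be the universal derivation into the module of Kähler differentials of R[1/p] over A, and let M be the D⁰-submodule of Ω_{R[1/p]/A} generated by { d(ι(r)) : r ∈ R }, where ι : R → R[1/p] is the canonical map. Then for every x ∈ 𝔞 and all integers i, j ≥ 0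 there exists ω ∈ M such that p·d( φ^i( δ^j( x/p ) ) ) = p^i · ω. In particular (taking i = 0), p·d( δ^j(x/p) ) ∈ M for all j ≥ 0 and x ∈ 𝔞. -/
/-!
Everything rests on one identity: if `ψ y = y ^ p + p δ y`, then for any derivation `d`,
`d (ψ y) = p (y ^ (p - 1) d y + d (δ y))`. Iterating it along `ψ^i r` for `r ∈ R` (where `δ`
restricts to `δR`) gives `d (ψ^i r) ∈ p ^ i M`. Since `d` kills `1/p`, this settles
`p d (ψ^i (x/p)) = d (ψ^i x)`, the case `j = 0`. For the step in `j`, differentiate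
`p ψ^i (δ w) = ψ^(i+1) w - (ψ^i w) ^ p`: both terms are controlled by the case `j` at `i + 1` and
at `i`, and `ψ^i w` lies in `D⁰` because `D⁰` is stable under `ψ = (·) ^ p + p δ`.
-/

/-- The subring `D⁰`: the `R`-subalgebra of `R[1/p]` generated by
`{ δ^j(y/p) : y ∈ 𝔞, j ≥ 0 }`. -/
noncomputable def Dzero (p : ℕ) {R : Type*} [CommRing R]
    (δ : Localization.Away (p : R) → Localization.Away (p : R)) (𝔞 : Ideal R) :
    Subalgebra R (Localization.Away (p : R)) :=
  Algebra.adjoin R {y : Localization.Away (p : R) | ∃ a ∈ 𝔞, ∃ j : ℕ,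
    y = δ^[j] (algebraMap R (Localization.Away (p : R)) a *
      IsLocalization.Away.invSelf (S := Localization.Away (p : R)) (p : R))}

/-- The `D⁰`-submodule `M` of `Ω_{R[1/p]/A}` generated by `{ d(ι r) : r ∈ R }`, realized
(as a set) as the additive closure of the `D⁰`-multiples of the `d(ι r)`. -/
noncomputable def Msub (p : ℕ) {A R : Type*} [CommRing A] [CommRing R] [Algebra A R]
    [Algebra A (Localization.Away (p : R))] [IsScalarTower A R (Localization.Away (p : R))]
    (δ : Localization.Away (p : R) → Localization.Away (p : R)) (𝔞 : Ideal R) :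
    AddSubmonoid (KaehlerDifferential A (Localization.Away (p : R))) :=
  AddSubmonoid.closure {η : KaehlerDifferential A (Localization.Away (p : R)) |
    ∃ c ∈ Dzero p δ 𝔞, ∃ r : R,
      η = c • (KaehlerDifferential.D A (Localization.Away (p : R)))
        (algebraMap R (Localization.Away (p : R)) r)}

namespace Derivation

variable {A S Ω : Type*} [CommRing A] [CommRing S] [Algebra A S] [AddCommGroup Ω] [Module A Ω]
  [Module S Ω] (D : Derivation A S Ω)

theorem map_pow_add_natCast_mul (p : ℕ) (y z : S) :
    D (y ^ p + (p : S) * z) = (p : S) • (y ^ (p - 1) • D y + D z) := by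
  rw [map_add, leibniz_pow, leibniz, map_natCast, smul_zero, add_zero, smul_add,
    Nat.cast_smul_eq_nsmul, Nat.cast_smul_eq_nsmul]

theorem smul_map_mul_of_mul_eq_one {c π : S} (hc : D c = 0) (h : c * π = 1) (z : S) :
    c • D (z * π) = D z := by
  have hπ : D π = 0 := by
    have h1 : c • D π = 0 := by simpa [h, hc] using (D.leibniz c π).symm
    rw [← one_smul S (D π), ← h, mul_comm, mul_smul, h1, smul_zero]
  rw [leibniz, hπ, smul_zero, zero_add, smul_smul, h, one_smul]

end Derivation

theorem AddSubmonoid.closure_smul_eq_span {R S Ω α : Type*} [CommRing R] [CommRing S] [Algebra R S]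
    [AddCommMonoid Ω] [Module S Ω] (B : Subalgebra R S) (f : α → Ω) :
    AddSubmonoid.closure {η | ∃ c ∈ B, ∃ a, η = c • f a} =
      (Submodule.span B (Set.range f)).toAddSubmonoid := by
  rw [Submodule.span_eq_closure]
  congr 1
  ext η
  simp only [Set.mem_ofPred_eq, Set.mem_smul, Set.mem_univ, Set.mem_range, true_and]
  constructor
  · rintro ⟨c, hc, a, rfl⟩
    exact ⟨⟨c, hc⟩, _, ⟨a, rfl⟩, rfl⟩
  · rintro ⟨c, _, ⟨a, rfl⟩, rfl⟩
    exact ⟨c, c.2, a, rfl⟩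

section FrobeniusLift

variable {A R S Ω : Type*} [CommRing A] [CommRing R] [CommRing S] [Algebra R S] [Algebra A S]
  [AddCommGroup Ω] [Module A Ω] [Module S Ω] (D : Derivation A S Ω) {B : Subalgebra R S}
  {N : Submodule B Ω} {p : ℕ} {φ : R →+* R} {δR : R → R} {ψ : S →+* S} {δ : S → S}

theorem iterate_mem_adjoin_of_mapsTo (hδ : ∀ y, (p : S) * δ y = ψ y - y ^ p) {G : Set S}
    (hG : Set.MapsTo δ G G) (i : ℕ) : ∀ g ∈ G, (⇑ψ)^[i] g ∈ Algebra.adjoin R G := by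
  induction i with
  | zero => exact fun g hg => Algebra.subset_adjoin hg
  | succ i ih =>
    intro g hg
    have hψg : ψ g = g ^ p + (p : S) * δ g := by rw [hδ]; ring
    rw [Function.iterate_succ_apply, hψg, ← RingHom.coe_pow, map_add, map_pow, map_mul,
      map_natCast, RingHom.coe_pow]
    exact add_mem (pow_mem (ih g hg) p)
      (mul_mem (Subalgebra.natCast_mem _ p) (ih (δ g) (hG hg)))

theorem exists_derivation_iterate_eq_pow_smul (hδ : ∀ y, (p : S) * δ y = ψ y - y ^ p)
    {T : Set S} (hT : Set.MapsTo δ T T) (hTB : ∀ i, ∀ x ∈ T, (⇑ψ)^[i] x ∈ B)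
    (hTN : ∀ x ∈ T, D x ∈ N) (i : ℕ) :
    ∀ x ∈ T, ∃ ω ∈ N, D ((⇑ψ)^[i] x) = (p : S) ^ i • ω := by
  induction i with
  | zero => exact fun x hx => ⟨D x, hTN x hx, by simp⟩
  | succ i ih =>
    intro x hx
    obtain ⟨ω₁, hω₁, e₁⟩ := ih x hx
    obtain ⟨ω₂, hω₂, e₂⟩ := ih (δ x) (hT hx)
    have hψx : ψ x = x ^ p + (p : S) * δ x := by rw [hδ]; ring
    refine ⟨((⇑ψ)^[i] x) ^ (p - 1) • ω₁ + ω₂,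
      add_mem (N.smul_mem ⟨_, pow_mem (hTB i x hx) _⟩ hω₁) hω₂, ?_⟩
    rw [Function.iterate_succ_apply, hψx, ← RingHom.coe_pow, map_add, map_pow, map_mul,
      map_natCast, RingHom.coe_pow, D.map_pow_add_natCast_mul, e₁, e₂, smul_comm _ _ ω₁,
      ← smul_add, pow_succ', mul_smul]

theorem exists_smul_derivation_iterate_delta_iterate_eq_pow_smul
    (hδ : ∀ y, (p : S) * δ y = ψ y - y ^ p) (hp : IsUnit (p : S)) {g : S}
    (hgB : ∀ i j, (⇑ψ)^[i] (δ^[j] g) ∈ B)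
    (hg : ∀ i, ∃ ω ∈ N, (p : S) • D ((⇑ψ)^[i] g) = (p : S) ^ i • ω) (j : ℕ) :
    ∀ i, ∃ ω ∈ N, (p : S) • D ((⇑ψ)^[i] (δ^[j] g)) = (p : S) ^ i • ω := by
  induction j with
  | zero => simpa using hg
  | succ j ih =>
    intro i
    obtain ⟨ω₁, hω₁, e₁⟩ := ih (i + 1)
    obtain ⟨ω₂, hω₂, e₂⟩ := ih i
    set w := δ^[j] g
    have e₁' : D ((⇑ψ)^[i + 1] w) = (p : S) ^ i • ω₁ := by
      rwa [pow_succ', mul_smul, hp.smul_left_cancel] at e₁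
    refine ⟨ω₁ - ((⇑ψ)^[i] w) ^ (p - 1) • ω₂,
      sub_mem hω₁ (N.smul_mem ⟨_, pow_mem (hgB i j) _⟩ hω₂), ?_⟩
    have key : (p : S) * (⇑ψ)^[i] (δ w) = (⇑ψ)^[i + 1] w - ((⇑ψ)^[i] w) ^ p := by
      rw [← RingHom.coe_pow, ← map_natCast (ψ ^ i), ← map_mul, hδ, map_sub, map_pow,
        RingHom.coe_pow, Function.iterate_succ_apply]
    have hpD : ∀ x : S, (p : S) • D x = D ((p : S) * x) := by simp [D.leibniz]
    rw [Function.iterate_succ_apply', hpD, key, map_sub, e₁', D.leibniz_pow,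
      ← Nat.cast_smul_eq_nsmul S, smul_comm (p : S), e₂, smul_sub, smul_comm _ ((p : S) ^ i)]

theorem exists_derivation_iterate_algebraMap_eq_pow_smul (hp : IsLeftRegular (p : S))
    (hδR : ∀ a, (p : R) * δR a = φ a - a ^ p)
    (hψ : ∀ a, ψ (algebraMap R S a) = algebraMap R S (φ a))
    (hδ : ∀ y, (p : S) * δ y = ψ y - y ^ p) (i : ℕ) (s : R) :
    ∃ ω ∈ Submodule.span B (Set.range fun r => D (algebraMap R S r)),
      D ((⇑ψ)^[i] (algebraMap R S s)) = (p : S) ^ i • ω := by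
  have hψι : ∀ i s, (⇑ψ)^[i] (algebraMap R S s) = algebraMap R S ((⇑φ)^[i] s) := fun i s =>
    ((Function.Semiconj.iterate_right (fun a => (hψ a).symm) i) s).symm
  refine exists_derivation_iterate_eq_pow_smul D hδ (T := Set.range (algebraMap R S))
    ?_ ?_ ?_ i _ ⟨s, rfl⟩
  · rintro _ ⟨s, rfl⟩
    refine ⟨δR s, hp ?_⟩
    dsimp only
    rw [hδ, hψ, ← map_natCast (algebraMap R S), ← map_mul, hδR, map_sub, map_pow]
  · rintro i _ ⟨s, rfl⟩
    rw [hψι]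
    exact Subalgebra.algebraMap_mem _ _
  · rintro _ ⟨s, rfl⟩
    exact Submodule.subset_span ⟨s, rfl⟩

theorem exists_smul_derivation_iterate_delta_iterate_eq_pow_smul_of_frobeniusLift
    {π : S} (hπ : (p : S) * π = 1) (hδR : ∀ a, (p : R) * δR a = φ a - a ^ p)
    (hψ : ∀ a, ψ (algebraMap R S a) = algebraMap R S (φ a))
    (hδ : ∀ y, (p : S) * δ y = ψ y - y ^ p) {X : Set R} {x : R} (hx : x ∈ X) (i j : ℕ) :
    ∃ ω ∈ Submodule.span
        (Algebra.adjoin R {y | ∃ a ∈ X, ∃ j : ℕ, y = δ^[j] (algebraMap R S a * π)})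
        (Set.range fun r => D (algebraMap R S r)),
      (p : S) • D ((⇑ψ)^[i] (δ^[j] (algebraMap R S x * π))) = (p : S) ^ i • ω := by
  have hp : IsUnit (p : S) := IsUnit.of_mul_eq_one _ hπ
  have hψπ : ψ π = π := hp.mul_left_cancel <| by
    rw [hπ, ← map_one ψ, ← hπ, map_mul, map_natCast]
  set G : Set S := {y | ∃ a ∈ X, ∃ j : ℕ, y = δ^[j] (algebraMap R S a * π)}
  have hG : Set.MapsTo δ G G := by
    rintro _ ⟨a, ha, j, rfl⟩
    exact ⟨a, ha, j + 1, (Function.iterate_succ_apply' δ j _).symm⟩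
  refine exists_smul_derivation_iterate_delta_iterate_eq_pow_smul D hδ hp
    (fun i j => iterate_mem_adjoin_of_mapsTo hδ hG i _ ⟨x, hx, j, rfl⟩) (fun i => ?_) j i
  rw [← RingHom.coe_pow, map_mul, RingHom.coe_pow, Function.iterate_fixed hψπ,
    D.smul_map_mul_of_mul_eq_one (D.map_natCast p) hπ]
  exact exists_derivation_iterate_algebraMap_eq_pow_smul D hp.isRegular.left hδR hψ hδ i x

end FrobeniusLift

theorem stmt15_general (p : ℕ) {A R : Type*} [CommRing A] [CommRing R] [Algebra A R]
    [Algebra A (Localization.Away (p : R))] [IsScalarTower A R (Localization.Away (p : R))]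
    (φ : R →+* R) (δR : R → R)
    (hδR : ∀ a : R, (p : R) * δR a = φ a - a ^ p)
    (ψ : Localization.Away (p : R) →+* Localization.Away (p : R))
    (hψ : ∀ a : R, ψ (algebraMap R (Localization.Away (p : R)) a)
        = algebraMap R (Localization.Away (p : R)) (φ a))
    (δ : Localization.Away (p : R) → Localization.Away (p : R))
    (hδ : ∀ y : Localization.Away (p : R), (p : Localization.Away (p : R)) * δ y = ψ y - y ^ p)
    (𝔞 : Ideal R) :
    (∀ x ∈ 𝔞, ∀ i j : ℕ, ∃ ω ∈ Msub p δ 𝔞,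
      (p : Localization.Away (p : R)) •
          (KaehlerDifferential.D A (Localization.Away (p : R)))
            ((⇑ψ)^[i] (δ^[j] (algebraMap R (Localization.Away (p : R)) x *
              IsLocalization.Away.invSelf (S := Localization.Away (p : R)) (p : R)))) =
        (p : Localization.Away (p : R)) ^ i • ω) ∧
    (∀ x ∈ 𝔞, ∀ j : ℕ,
      (p : Localization.Away (p : R)) •
          (KaehlerDifferential.D A (Localization.Away (p : R)))
            (δ^[j] (algebraMap R (Localization.Away (p : R)) x *
              IsLocalization.Away.invSelf (S := Localization.Away (p : R)) (p : R))) ∈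
        Msub p δ 𝔞) := by
  rw [Msub, AddSubmonoid.closure_smul_eq_span]
  have hπ := IsLocalization.Away.mul_invSelf (S := Localization.Away (p : R)) (p : R)
  rw [map_natCast] at hπ
  have main := fun x (hx : x ∈ 𝔞) i j =>
    exists_smul_derivation_iterate_delta_iterate_eq_pow_smul_of_frobeniusLift
      (KaehlerDifferential.D A _) hπ hδR hψ hδ hx i j
  refine ⟨main, fun x hx j => ?_⟩
  obtain ⟨ω, hω, e⟩ := main x hx 0 j
  rw [Function.iterate_zero_apply, pow_zero, one_smul] at e
  exact e ▸ hω

/-- Let `R` be a `p`-torsion-free `A`-algebra with a Frobenius lift `φ`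
(with `δ`-operator `δR`), extended to `R[1/p]` as `ψ` with extended `δ`-operator `δ`. Let
`𝔞 ⊆ R` be an ideal with `p ∈ 𝔞`, `D⁰` the `R`-subalgebra of `R[1/p]` generated by the
`δ^j(y/p)` for `y ∈ 𝔞`, `d` the universal derivation of `R[1/p]` over `A`, and `M` the
`D⁰`-submodule of `Ω_{R[1/p]/A}` generated by the `d(ι r)`, `r ∈ R`. Then for every
`x ∈ 𝔞` and all `i, j ≥ 0` there is `ω ∈ M` with `p·d(φ^i(δ^j(x/p))) = p^i·ω`; in
particular `p·d(δ^j(x/p)) ∈ M` for all `j ≥ 0` and `x ∈ 𝔞`. -/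
theorem stmt15 (p : ℕ) (hp : p.Prime) {A R : Type*} [CommRing A] [CommRing R] [Algebra A R]
    [Algebra A (Localization.Away (p : R))] [IsScalarTower A R (Localization.Away (p : R))]
    (hR : Function.Injective fun a : R => (p : R) * a)
    (φ : R →+* R) (δR : R → R)
    (hδR : ∀ a : R, (p : R) * δR a = φ a - a ^ p)
    (ψ : Localization.Away (p : R) →+* Localization.Away (p : R))
    (hψ : ∀ a : R, ψ (algebraMap R (Localization.Away (p : R)) a)
        = algebraMap R (Localization.Away (p : R)) (φ a))
    (δ : Localization.Away (p : R) → Localization.Away (p : R))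
    (hδ : ∀ y : Localization.Away (p : R), (p : Localization.Away (p : R)) * δ y = ψ y - y ^ p)
    (𝔞 : Ideal R) (h𝔞 : (p : R) ∈ 𝔞) :
    (∀ x ∈ 𝔞, ∀ i j : ℕ, ∃ ω ∈ Msub p δ 𝔞,
      (p : Localization.Away (p : R)) •
          (KaehlerDifferential.D A (Localization.Away (p : R)))
            ((⇑ψ)^[i] (δ^[j] (algebraMap R (Localization.Away (p : R)) x *
              IsLocalization.Away.invSelf (S := Localization.Away (p : R)) (p : R)))) =
        (p : Localization.Away (p : R)) ^ i • ω) ∧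
    (∀ x ∈ 𝔞, ∀ j : ℕ,
      (p : Localization.Away (p : R)) •
          (KaehlerDifferential.D A (Localization.Away (p : R)))
            (δ^[j] (algebraMap R (Localization.Away (p : R)) x *
              IsLocalization.Away.invSelf (S := Localization.Away (p : R)) (p : R))) ∈
        Msub p δ 𝔞) :=
  stmt15_general p φ δR hδR ψ hψ δ hδ 𝔞
end
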